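/- Let L > 0 and fix α, β with 0 < |α| < 1 and β > 0. Let v : [0,L]² → ℝ be of class C³ and satisfy the boundary conditions v(0,y) = v(L,y) = 0, v_x(0,y) = α v_x(L,y) for all y ∈ [0,L], and v_y(x,L) = −β v_x(x,L), v_y(x,0) = 0 for all x ∈ [0,L]. Then ∫_Ω v(x,y) · ( v_x(x,y) + v_xxx(x,y) + ((∂ₓ⁻¹)* v_yy)(x,y) ) dx dy = −((1−α²)/2) ∫₀^L v_x(L,y)² dy − β ∫₀^L v(x,L)² dx − ½ ∫₀^L (((∂ₓ⁻¹)* v_y)(L,y))² dy; in particular this quantity is ≤ 0. -/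

import Mathlib

/-!
Integrate each of the three parts of `A* v` against `v` by parts on the square. The transport
term gives `½ [v²]` at `x = 0, L`, which vanishes. Two integrations by parts in `x` turn
`∫ v v_xxx` into `-½ [v_x²]` at `x = 0, L`, and `v_x(0,y) = α v_x(L,y)` makes this
`-(1-α²)/2 · v_x(L,y)²`. For the nonlocal term put `W = (∂ₓ⁻¹)* v_y`, so that `W_x = v_y` and
`W_y = (∂ₓ⁻¹)* v_yy`. Integrating by parts in `y` leaves the boundary term `v W` at `y = L`,
where `W(x,L) = -β v(x,L)` by the condition on `v_y(·,L)` (and `W(x,0) = 0`), minus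
`∫ v_y W = ∫ W_x W = ½ ∫ W(L,y)² dy`.
-/

open MeasureTheory Real

noncomputable section

/-- Partial derivative in `x` of `u(x,y)`. -/
def pdx (u : ℝ → ℝ → ℝ) (x y : ℝ) : ℝ := deriv (fun x' => u x' y) x

/-- Third partial derivative in `x` of `u(x,y)`. -/
def pdx3 (u : ℝ → ℝ → ℝ) (x y : ℝ) : ℝ := iteratedDeriv 3 (fun x' => u x' y) x

/-- Partial derivative in `y` of `u(x,y)`. -/
def pdy (u : ℝ → ℝ → ℝ) (x y : ℝ) : ℝ := deriv (fun y' => u x y') y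

/-- Second partial derivative in `y` of `u(x,y)`. -/
def pdy2 (u : ℝ → ℝ → ℝ) (x y : ℝ) : ℝ := iteratedDeriv 2 (fun y' => u x y') y

/-- The nonlocal operator `(∂ₓ⁻¹ w)(x,y) = -∫ₓ^L w(s,y) ds`. -/
def pxInv (L : ℝ) (w : ℝ → ℝ → ℝ) (x y : ℝ) : ℝ := -(∫ s in x..L, w s y)

/-- The adjoint nonlocal operator `((∂ₓ⁻¹)* w)(x,y) = ∫₀^x w(s,y) ds`. -/
def pxInvStar (w : ℝ → ℝ → ℝ) (x y : ℝ) : ℝ := ∫ s in (0:ℝ)..x, w s y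

open Function Set intervalIntegral

section PartialDerivatives

variable {u : ℝ → ℝ → ℝ}

theorem hasDerivAt_pdx (hu : Differentiable ℝ (uncurry u)) (x y : ℝ) :
    HasDerivAt (fun x' => u x' y) (pdx u x y) x :=
  (hu.comp (differentiable_id.prodMk (differentiable_const y))).differentiableAt.hasDerivAt

theorem hasDerivAt_pdy (hu : Differentiable ℝ (uncurry u)) (x y : ℝ) :
    HasDerivAt (fun y' => u x y') (pdy u x y) y :=
  (hu.comp ((differentiable_const x).prodMk differentiable_id)).differentiableAt.hasDerivAt

theorem pdx_eq_fderiv (hu : Differentiable ℝ (uncurry u)) (x y : ℝ) :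
    pdx u x y = fderiv ℝ (uncurry u) (x, y) (1, 0) :=
  (hasDerivAt_pdx hu x y).unique <|
    (hu _).hasFDerivAt.comp_hasDerivAt x ((hasDerivAt_id x).prodMk (hasDerivAt_const x y))

theorem pdy_eq_fderiv (hu : Differentiable ℝ (uncurry u)) (x y : ℝ) :
    pdy u x y = fderiv ℝ (uncurry u) (x, y) (0, 1) :=
  (hasDerivAt_pdy hu x y).unique <|
    (hu _).hasFDerivAt.comp_hasDerivAt y ((hasDerivAt_const y x).prodMk (hasDerivAt_id y))

theorem contDiff_pdx {m n : WithTop ℕ∞} (hu : ContDiff ℝ n (uncurry u)) (hmn : m + 1 ≤ n) :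
    ContDiff ℝ m (uncurry (pdx u)) := by
  have hd : Differentiable ℝ (uncurry u) :=
    hu.differentiable (ne_bot_of_le_ne_bot (by simp) hmn)
  rw [show uncurry (pdx u) = fun p => fderiv ℝ (uncurry u) p (1, 0) from
    funext fun p => pdx_eq_fderiv hd p.1 p.2]
  exact (hu.fderiv_right hmn).clm_apply contDiff_const

theorem contDiff_pdy {m n : WithTop ℕ∞} (hu : ContDiff ℝ n (uncurry u)) (hmn : m + 1 ≤ n) :
    ContDiff ℝ m (uncurry (pdy u)) := by
  have hd : Differentiable ℝ (uncurry u) :=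
    hu.differentiable (ne_bot_of_le_ne_bot (by simp) hmn)
  rw [show uncurry (pdy u) = fun p => fderiv ℝ (uncurry u) p (0, 1) from
    funext fun p => pdy_eq_fderiv hd p.1 p.2]
  exact (hu.fderiv_right hmn).clm_apply contDiff_const

theorem continuous_pdx (hu : ContDiff ℝ 1 (uncurry u)) : Continuous (uncurry (pdx u)) :=
  (contDiff_pdx hu (by norm_num) : ContDiff ℝ 0 _).continuous

theorem continuous_pdy (hu : ContDiff ℝ 1 (uncurry u)) : Continuous (uncurry (pdy u)) :=
  (contDiff_pdy hu (by norm_num) : ContDiff ℝ 0 _).continuous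

theorem pdx3_eq : pdx3 u = pdx (pdx (pdx u)) := by
  funext x y
  simp only [pdx3, iteratedDeriv_eq_iterate]
  rfl

theorem pdy2_eq : pdy2 u = pdy (pdy u) := by
  funext x y
  simp only [pdy2, iteratedDeriv_eq_iterate]
  rfl

end PartialDerivatives

theorem intervalIntegral_intervalIntegral_swap_of_continuous {F : ℝ → ℝ → ℝ} {a b c d : ℝ}
    (hF : Continuous (uncurry F)) :
    ∫ x in a..b, ∫ y in c..d, F x y = ∫ y in c..d, ∫ x in a..b, F x y :=
  intervalIntegral_intervalIntegral_swap <|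
    (hF.continuousOn.integrableOn_compact (isCompact_uIcc.prod isCompact_uIcc)).mono_set
      (prod_mono uIoc_subset_uIcc uIoc_subset_uIcc)

theorem intervalIntegral_intervalIntegral_add {F G : ℝ → ℝ → ℝ} {a b c d : ℝ}
    (hF : Continuous (uncurry F)) (hG : Continuous (uncurry G)) :
    ∫ x in a..b, ∫ y in c..d, (F x y + G x y)
      = (∫ x in a..b, ∫ y in c..d, F x y) + ∫ x in a..b, ∫ y in c..d, G x y := by
  have inner (x : ℝ) : ∫ y in c..d, (F x y + G x y) = (∫ y in c..d, F x y) + ∫ y in c..d, G x y :=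
    integral_add ((hF.uncurry_left x).intervalIntegrable _ _)
      ((hG.uncurry_left x).intervalIntegrable _ _)
  simp only [inner]
  exact integral_add ((continuous_parametric_intervalIntegral_of_continuous' hF c d).intervalIntegrable _ _)
    ((continuous_parametric_intervalIntegral_of_continuous' hG c d).intervalIntegrable _ _)

section OneDimensional

variable {f f₁ f₂ f₃ : ℝ → ℝ} {a b : ℝ}

theorem integral_mul_deriv_self (hf : ∀ x ∈ uIcc a b, HasDerivAt f (f₁ x) x)
    (hf₁ : IntervalIntegrable f₁ volume a b) :
    ∫ x in a..b, f x * f₁ x = (f b ^ 2 - f a ^ 2) / 2 := by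
  have h := integral_mul_deriv_eq_deriv_mul hf hf hf₁ hf₁
  simp only [mul_comm (f₁ _)] at h
  linarith

theorem integral_mul_third_deriv_of_eq_zero (h₁ : ∀ x ∈ uIcc a b, HasDerivAt f (f₁ x) x)
    (h₂ : ∀ x ∈ uIcc a b, HasDerivAt f₁ (f₂ x) x) (h₃ : ∀ x ∈ uIcc a b, HasDerivAt f₂ (f₃ x) x)
    (i₁ : IntervalIntegrable f₁ volume a b) (i₂ : IntervalIntegrable f₂ volume a b)
    (i₃ : IntervalIntegrable f₃ volume a b) (ha : f a = 0) (hb : f b = 0) :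
    ∫ x in a..b, f x * f₃ x = -(f₁ b ^ 2 - f₁ a ^ 2) / 2 := by
  rw [integral_mul_deriv_eq_deriv_mul h₁ h₃ i₁ i₃, integral_mul_deriv_self h₂ i₂, ha, hb]
  ring

end OneDimensional

section PxInvStar

variable {w : ℝ → ℝ → ℝ}

@[simp]
theorem pxInvStar_zero_left (w : ℝ → ℝ → ℝ) (y : ℝ) : pxInvStar w 0 y = 0 :=
  integral_same

theorem continuous_pxInvStar (hw : Continuous (uncurry w)) :
    Continuous (uncurry (pxInvStar w)) := by
  unfold pxInvStar
  fun_prop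

theorem hasDerivAt_pxInvStar_left (hw : Continuous (uncurry w)) (x y : ℝ) :
    HasDerivAt (fun x' => pxInvStar w x' y) (w x y) x :=
  ((hw.uncurry_right y).integral_hasStrictDerivAt 0 x).hasDerivAt

theorem pxInvStar_eq_add_integral_pdy (hw : ContDiff ℝ 1 (uncurry w)) (x y : ℝ) :
    pxInvStar w x y = pxInvStar w x 0 + ∫ t in 0..y, pxInvStar (pdy w) x t := by
  have hc := continuous_pdy hw
  have ftc (s : ℝ) : ∫ t in 0..y, pdy w s t = w s y - w s 0 :=
    integral_eq_sub_of_hasDerivAt (fun t _ => hasDerivAt_pdy (hw.differentiable one_ne_zero) s t)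
      ((hc.uncurry_left s).intervalIntegrable _ _)
  simp only [pxInvStar]
  rw [← intervalIntegral_intervalIntegral_swap_of_continuous hc]
  simp only [ftc]
  rw [integral_sub ((hw.continuous.uncurry_right y).intervalIntegrable _ _)
    ((hw.continuous.uncurry_right 0).intervalIntegrable _ _)]
  ring

theorem hasDerivAt_pxInvStar_right (hw : ContDiff ℝ 1 (uncurry w)) (x y : ℝ) :
    HasDerivAt (fun y' => pxInvStar w x y') (pxInvStar (pdy w) x y) y := by
  rw [funext (pxInvStar_eq_add_integral_pdy hw x)]
  exact ((((continuous_pxInvStar (continuous_pdy hw)).uncurry_left x).integral_hasStrictDerivAt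
    0 y).hasDerivAt.const_add _)

theorem integral_integral_mul_pxInvStar_self (hw : Continuous (uncurry w)) (a c d : ℝ) :
    ∫ x in 0..a, ∫ y in c..d, w x y * pxInvStar w x y
      = (∫ y in c..d, pxInvStar w a y ^ 2) / 2 := by
  rw [intervalIntegral_intervalIntegral_swap_of_continuous, ← intervalIntegral.integral_div]
  · refine integral_congr fun y _ => ?_
    simp only [mul_comm (w _ _)]
    rw [integral_mul_deriv_self (fun x _ => hasDerivAt_pxInvStar_left hw x y)
      ((hw.uncurry_right y).intervalIntegrable _ _), pxInvStar_zero_left]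
    ring
  · exact hw.mul (continuous_pxInvStar hw)

end PxInvStar

section AdjointTerms

variable {v : ℝ → ℝ → ℝ} {L : ℝ}

theorem integral_integral_mul_pdx_of_eq_zero (hv : ContDiff ℝ 1 (uncurry v)) (hL : 0 ≤ L)
    (hv0 : ∀ y ∈ Icc 0 L, v 0 y = 0) (hvL : ∀ y ∈ Icc 0 L, v L y = 0) :
    ∫ x in 0..L, ∫ y in 0..L, v x y * pdx v x y = 0 := by
  rw [intervalIntegral_intervalIntegral_swap_of_continuous]
  · refine (integral_congr fun y hy => ?_).trans integral_zero
    rw [uIcc_of_le hL] at hy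
    rw [integral_mul_deriv_self (fun x _ => hasDerivAt_pdx (hv.differentiable one_ne_zero) x y)
      (((continuous_pdx hv).uncurry_right y).intervalIntegrable _ _), hv0 y hy, hvL y hy]
    simp
  · exact hv.continuous.mul (continuous_pdx hv)

theorem integral_integral_mul_pdx3 {α : ℝ} (hv : ContDiff ℝ 3 (uncurry v)) (hL : 0 ≤ L)
    (hv0 : ∀ y ∈ Icc 0 L, v 0 y = 0) (hvL : ∀ y ∈ Icc 0 L, v L y = 0)
    (hα : ∀ y ∈ Icc 0 L, pdx v 0 y = α * pdx v L y) :
    ∫ x in 0..L, ∫ y in 0..L, v x y * pdx3 v x y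
      = -((1 - α ^ 2) / 2) * ∫ y in 0..L, pdx v L y ^ 2 := by
  have hv₁ : ContDiff ℝ 2 (uncurry (pdx v)) := contDiff_pdx hv (by norm_num)
  have hv₂ : ContDiff ℝ 1 (uncurry (pdx (pdx v))) := contDiff_pdx hv₁ (by norm_num)
  have hv₃ : Continuous (uncurry (pdx (pdx (pdx v)))) := continuous_pdx hv₂
  rw [pdx3_eq, intervalIntegral_intervalIntegral_swap_of_continuous, ← intervalIntegral.integral_const_mul]
  · refine integral_congr fun y hy => ?_
    rw [uIcc_of_le hL] at hy
    rw [integral_mul_third_deriv_of_eq_zero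
      (fun x _ => hasDerivAt_pdx (hv.differentiable (by norm_num)) x y)
      (fun x _ => hasDerivAt_pdx (hv₁.differentiable (by norm_num)) x y)
      (fun x _ => hasDerivAt_pdx (hv₂.differentiable (by norm_num)) x y)
      ((hv₁.continuous.uncurry_right y).intervalIntegrable _ _)
      ((hv₂.continuous.uncurry_right y).intervalIntegrable _ _)
      ((hv₃.uncurry_right y).intervalIntegrable _ _) (hv0 y hy) (hvL y hy), hα y hy]
    ring
  · exact hv.continuous.mul hv₃

theorem pxInvStar_eq_zero {w : ℝ → ℝ → ℝ} {x y : ℝ} (hx : 0 ≤ x)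
    (hw : ∀ s ∈ Icc 0 x, w s y = 0) : pxInvStar w x y = 0 := by
  rw [pxInvStar, integral_congr (g := fun _ => 0) fun s hs => hw s (uIcc_of_le hx ▸ hs)]
  exact integral_zero

theorem pxInvStar_eq_mul_sub {w : ℝ → ℝ → ℝ} {c x y : ℝ} (hv : ContDiff ℝ 1 (uncurry v))
    (hx : 0 ≤ x) (hw : ∀ s ∈ Icc 0 x, w s y = c * pdx v s y) :
    pxInvStar w x y = c * (v x y - v 0 y) := by
  rw [pxInvStar, integral_congr fun s hs => hw s (uIcc_of_le hx ▸ hs),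
    intervalIntegral.integral_const_mul,
    integral_eq_sub_of_hasDerivAt (fun s _ => hasDerivAt_pdx (hv.differentiable one_ne_zero) s y)
      (((continuous_pdx hv).uncurry_right y).intervalIntegrable _ _)]

theorem integral_integral_mul_pxInvStar_pdy2 {β : ℝ} (hv : ContDiff ℝ 2 (uncurry v)) (hL : 0 ≤ L)
    (hv0 : v 0 L = 0) (htop : ∀ x ∈ Icc 0 L, pdy v x L = -β * pdx v x L)
    (hbot : ∀ x ∈ Icc 0 L, pdy v x 0 = 0) :
    ∫ x in 0..L, ∫ y in 0..L, v x y * pxInvStar (pdy2 v) x y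
      = -β * (∫ x in 0..L, v x L ^ 2) - (∫ y in 0..L, pxInvStar (pdy v) L y ^ 2) / 2 := by
  have hv₁ : ContDiff ℝ 1 (uncurry v) := hv.of_le (by norm_num)
  have hvy : ContDiff ℝ 1 (uncurry (pdy v)) := contDiff_pdy hv (by norm_num)
  have hW : Continuous (uncurry (pxInvStar (pdy v))) := continuous_pxInvStar hvy.continuous
  have inner : ∀ x ∈ uIcc 0 L, ∫ y in 0..L, v x y * pxInvStar (pdy2 v) x y
      = -β * v x L ^ 2 - ∫ y in 0..L, pdy v x y * pxInvStar (pdy v) x y := by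
    intro x hx
    rw [uIcc_of_le hL] at hx
    rw [pdy2_eq, integral_mul_deriv_eq_deriv_mul
      (fun y _ => hasDerivAt_pdy (hv₁.differentiable one_ne_zero) x y)
      (fun y _ => hasDerivAt_pxInvStar_right hvy x y)
      ((hvy.continuous.uncurry_left x).intervalIntegrable _ _)
      (((continuous_pxInvStar (continuous_pdy hvy)).uncurry_left x).intervalIntegrable _ _),
      pxInvStar_eq_zero hx.1 fun s hs => hbot s ⟨hs.1, hs.2.trans hx.2⟩,
      pxInvStar_eq_mul_sub hv₁ hx.1 fun s hs => htop s ⟨hs.1, hs.2.trans hx.2⟩, hv0]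
    ring
  rw [integral_congr inner, intervalIntegral.integral_sub, intervalIntegral.integral_const_mul,
    integral_integral_mul_pxInvStar_self hvy.continuous]
  · exact ((hv.continuous.uncurry_right L).pow 2).const_mul _ |>.intervalIntegrable _ _
  · exact (continuous_parametric_intervalIntegral_of_continuous' (hvy.continuous.mul hW) _ _
      ).intervalIntegrable _ _

theorem integral_integral_mul_adjoint {α β : ℝ} (hv : ContDiff ℝ 3 (uncurry v)) (hL : 0 ≤ L)
    (hbx : ∀ y ∈ Icc 0 L, v 0 y = 0 ∧ v L y = 0 ∧ pdx v 0 y = α * pdx v L y)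
    (hby : ∀ x ∈ Icc 0 L, pdy v x L = -β * pdx v x L ∧ pdy v x 0 = 0) :
    ∫ x in 0..L, ∫ y in 0..L, v x y * (pdx v x y + pdx3 v x y + pxInvStar (pdy2 v) x y)
      = -((1 - α ^ 2) / 2) * (∫ y in 0..L, pdx v L y ^ 2) - β * (∫ x in 0..L, v x L ^ 2)
        - (∫ y in 0..L, pxInvStar (pdy v) L y ^ 2) / 2 := by
  have hv₁ : ContDiff ℝ 1 (uncurry v) := hv.of_le (by norm_num)
  have hv₂ : ContDiff ℝ 2 (uncurry v) := hv.of_le (by norm_num)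
  have hvx : Continuous (uncurry fun x y => v x y * pdx v x y) :=
    hv.continuous.mul (continuous_pdx hv₁)
  have hvxxx : Continuous (uncurry fun x y => v x y * pdx3 v x y) := by
    rw [pdx3_eq]
    exact hv.continuous.mul
      (continuous_pdx (contDiff_pdx (contDiff_pdx hv (m := 2) (by norm_num)) (by norm_num)))
  have hvyy : Continuous (uncurry fun x y => v x y * pxInvStar (pdy2 v) x y) := by
    rw [pdy2_eq]
    exact hv.continuous.mul
      (continuous_pxInvStar (continuous_pdy (contDiff_pdy hv₂ (by norm_num))))
  simp only [mul_add]
  rw [intervalIntegral_intervalIntegral_add, intervalIntegral_intervalIntegral_add,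
    integral_integral_mul_pdx_of_eq_zero hv₁ hL (fun y hy => (hbx y hy).1)
      (fun y hy => (hbx y hy).2.1),
    integral_integral_mul_pdx3 hv hL (fun y hy => (hbx y hy).1) (fun y hy => (hbx y hy).2.1)
      (fun y hy => (hbx y hy).2.2),
    integral_integral_mul_pxInvStar_pdy2 hv₂ hL (hbx L ⟨hL, le_rfl⟩).1
      (fun x hx => (hby x hx).1) (fun x hx => (hby x hx).2)]
  · ring
  exacts [hvx, hvxxx, hvx.add hvxxx, hvyy]

end AdjointTerms

theorem kp_adjoint_operator_dissipative_general (L α β : ℝ) (hL : 0 < L)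
    (hα1 : |α| < 1) (hβ : 0 < β)
    (v : ℝ → ℝ → ℝ) (hv : ContDiff ℝ 3 (fun p : ℝ × ℝ => v p.1 p.2))
    (hbx : ∀ y ∈ Set.Icc (0:ℝ) L, v 0 y = 0 ∧ v L y = 0 ∧ pdx v 0 y = α * pdx v L y)
    (hby : ∀ x ∈ Set.Icc (0:ℝ) L, pdy v x L = -β * pdx v x L ∧ pdy v x 0 = 0) :
    (∫ x in (0:ℝ)..L, ∫ y in (0:ℝ)..L,
        v x y * (pdx v x y + pdx3 v x y + pxInvStar (pdy2 v) x y))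
      = -((1 - α^2)/2) * (∫ y in (0:ℝ)..L, (pdx v L y)^2)
        - β * (∫ x in (0:ℝ)..L, (v x L)^2)
        - (1/2) * (∫ y in (0:ℝ)..L, (pxInvStar (pdy v) L y)^2) ∧
    (∫ x in (0:ℝ)..L, ∫ y in (0:ℝ)..L,
        v x y * (pdx v x y + pdx3 v x y + pxInvStar (pdy2 v) x y)) ≤ 0 := by
  have identity := integral_integral_mul_adjoint hv hL.le hbx hby
  refine ⟨identity.trans (by ring), identity ▸ ?_⟩
  have hα : α ^ 2 ≤ 1 := by nlinarith [abs_nonneg α, sq_abs α]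
  have h₁ : 0 ≤ ∫ y in 0..L, pdx v L y ^ 2 := integral_nonneg hL.le fun y _ => sq_nonneg _
  have h₂ : 0 ≤ ∫ x in 0..L, v x L ^ 2 := integral_nonneg hL.le fun x _ => sq_nonneg _
  have h₃ : 0 ≤ ∫ y in 0..L, pxInvStar (pdy v) L y ^ 2 :=
    integral_nonneg hL.le fun y _ => sq_nonneg _
  nlinarith [mul_nonneg (sub_nonneg.2 hα) h₁, mul_nonneg hβ.le h₂]

/-- Dissipativity of the adjoint operator `A* v = v_x + v_xxx + (∂ₓ⁻¹)* v_yy` under the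
adjoint boundary conditions:
`∫_Ω v · A*v = -((1-α²)/2) ∫₀^L v_x(L,y)² dy - β ∫₀^L v(x,L)² dx
  - ½ ∫₀^L (((∂ₓ⁻¹)* v_y)(L,y))² dy ≤ 0`. -/
theorem kp_adjoint_operator_dissipative (L α β : ℝ) (hL : 0 < L)
    (hα0 : 0 < |α|) (hα1 : |α| < 1) (hβ : 0 < β)
    (v : ℝ → ℝ → ℝ) (hv : ContDiff ℝ 3 (fun p : ℝ × ℝ => v p.1 p.2))
    (hbx : ∀ y ∈ Set.Icc (0:ℝ) L, v 0 y = 0 ∧ v L y = 0 ∧ pdx v 0 y = α * pdx v L y)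
    (hby : ∀ x ∈ Set.Icc (0:ℝ) L, pdy v x L = -β * pdx v x L ∧ pdy v x 0 = 0) :
    (∫ x in (0:ℝ)..L, ∫ y in (0:ℝ)..L,
        v x y * (pdx v x y + pdx3 v x y + pxInvStar (pdy2 v) x y))
      = -((1 - α^2)/2) * (∫ y in (0:ℝ)..L, (pdx v L y)^2)
        - β * (∫ x in (0:ℝ)..L, (v x L)^2)
        - (1/2) * (∫ y in (0:ℝ)..L, (pxInvStar (pdy v) L y)^2) ∧
    (∫ x in (0:ℝ)..L, ∫ y in (0:ℝ)..L,
        v x y * (pdx v x y + pdx3 v x y + pxInvStar (pdy2 v) x y)) ≤ 0 :=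
  kp_adjoint_operator_dissipative_general L α β hL hα1 hβ v hv hbx hby

end
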